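/- Let β, R > 0, let s > 0 with s < R/2, set α² = (4/(27β⁴))·(R + s)²·(R − 2s) and φ_k = ((2/(3β²))·(R + s))^(1/4). Then the potential V_R(φ) = −(R/16)φ² + (β²/48)φ⁶ − (α²/48)φ⁻⁶ satisfies V_R'(φ_k) = 0 and V_R''(φ_k) = s. -/

import Mathlib

/-- The potential `V_R` of the reduced Lichnerowicz ODE in the general
(non-normalized) conformal gauge with scalar curvature `R`. -/
noncomputable def VR (R α β φ : ℝ) : ℝ :=
  -(R / 16) * φ ^ 2 + (β ^ 2 / 48) * φ ^ 6 - (α ^ 2 / 48) / φ ^ 6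

lemma VR_hasDerivAt (R α β x : ℝ) (hx : x ≠ 0) :
    HasDerivAt (VR R α β) (-(R/8)*x + (β^2/8)*x^5 + (α^2/8)/x^7) x := by
  have h6 : (x : ℝ) ^ 6 ≠ 0 := pow_ne_zero _ hx
  have h : HasDerivAt (VR R α β)
      (-(R/16) * (2 * x ^ 1) + (β^2/48) * (6 * x ^ 5)
        - ((0 * x ^ 6 - (α^2/48) * (6 * x ^ 5)) / (x ^ 6) ^ 2)) x := by
    unfold VR
    exact (((hasDerivAt_pow 2 x).const_mul (-(R/16))).add
      ((hasDerivAt_pow 6 x).const_mul (β^2/48))).sub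
      ((hasDerivAt_const x (α^2/48)).div (hasDerivAt_pow 6 x) h6)
  convert h using 1
  field_simp
  ring

lemma g_hasDerivAt (R α β x : ℝ) (hx : x ≠ 0) :
    HasDerivAt (fun y : ℝ => -(R/8)*y + (β^2/8)*y^5 + (α^2/8)/y^7)
      (-(R/8) + (5*β^2/8)*x^4 - (7*α^2/8)/x^8) x := by
  have h7 : (x : ℝ) ^ 7 ≠ 0 := pow_ne_zero _ hx
  have h : HasDerivAt (fun y : ℝ => -(R/8)*y + (β^2/8)*y^5 + (α^2/8)/y^7)
      (-(R/8) * 1 + (β^2/8) * (5 * x ^ 4)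
        + ((0 * x ^ 7 - (α^2/8) * (7 * x ^ 6)) / (x ^ 7) ^ 2)) x := by
    exact (((hasDerivAt_id x).const_mul (-(R/8))).add
      ((hasDerivAt_pow 5 x).const_mul (β^2/8))).add
      ((hasDerivAt_const x (α^2/8)).div (hasDerivAt_pow 7 x) h7)
  convert h using 1
  field_simp
  ring

/-- at the bifurcation value `α² = (4/(27β⁴))(R+s)²(R−2s)` the
point `φ_k = ((2/(3β²))(R+s))^(1/4)` is a critical point of `V_R` with
`V_R''(φ_k) = s`. -/
theorem stmt_16 (R β s α : ℝ) (hβ : 0 < β) (hR : 0 < R) (hs : 0 < s)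
    (hsR : s < R / 2)
    (hα : α ^ 2 = (4 / (27 * β ^ 4)) * (R + s) ^ 2 * (R - 2 * s))
    (φk : ℝ) (hφk : φk = ((2 / (3 * β ^ 2)) * (R + s)) ^ ((1 : ℝ) / 4)) :
    deriv (VR R α β) φk = 0 ∧ deriv (deriv (VR R α β)) φk = s := by
  set c : ℝ := (2 / (3 * β ^ 2)) * (R + s) with hc_def
  have hRs : (0:ℝ) < R + s := by linarith
  have hc : (0:ℝ) < c := by rw [hc_def]; positivity
  have hφpos : 0 < φk := by rw [hφk]; exact Real.rpow_pos_of_pos hc _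
  have hφ0 : φk ≠ 0 := ne_of_gt hφpos
  have ht : φk ^ 4 = c := by
    rw [hφk, ← Real.rpow_natCast (c ^ ((1:ℝ)/4)) 4, ← Real.rpow_mul hc.le]
    norm_num
  have h5 : φk ^ 5 = φk * c := by rw [← ht]; ring
  have h8 : φk ^ 8 = c ^ 2 := by rw [← ht]; ring
  have hβ2 : β ^ 2 ≠ 0 := by positivity
  have hE1 : -(R/8)*φk + (β^2/8)*φk^5 + (α^2/8)/φk^7 = 0 := by
    have h7 : (α^2/8)/φk^7 = (α^2/8)*φk/φk^8 := by
      field_simp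
    rw [h7, h8, h5, hα, hc_def]
    field_simp
    ring
  have hE2 : -(R/8) + (5*β^2/8)*φk^4 - (7*α^2/8)/φk^8 = s := by
    rw [ht, h8, hα, hc_def]
    field_simp
    ring
  have hd1 : deriv (VR R α β) φk = 0 := by
    rw [(VR_hasDerivAt R α β φk hφ0).deriv]; exact hE1
  refine ⟨hd1, ?_⟩
  have hev : deriv (VR R α β) =ᶠ[nhds φk]
      fun y : ℝ => -(R/8)*y + (β^2/8)*y^5 + (α^2/8)/y^7 := by
    filter_upwards [eventually_ne_nhds hφ0] with x hx
    exact (VR_hasDerivAt R α β x hx).deriv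
  rw [hev.deriv_eq, (g_hasDerivAt R α β φk hφ0).deriv]
  exact hE2
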